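/- Calibration of the geometric logistic loss: assume the kernel matrix K = (exp(−c_{ij}/2))_{i,j} is positive definite. Let (X, Σ) be a measurable space and ρ a probability measure on X × △^d; for measurable g : X → ℝ^d set ℛ(g) = ∫ ℓ_Ω(α, g(x)) dρ(x,α), and for measurable β : X → △^d set ℰ(β) = ∫ D_Ω(α, β(x)) dρ(x,α), assuming these integrals exist. Then: (i) for every measurable β : X → △^d, ℛ(∇Ω ∘ β) = ℰ(β); (ii) for every measurable g : X → ℝ^d, ℰ(g-softmax ∘ g) ≤ ℛ(g); consequently the infimum of ℰ over measurable β equals the infimum of ℛ over measurable g, and for every measurable g, ℰ(g-softmax ∘ g) − inf_β ℰ(β) ≤ ℛ(g) − inf_{g'} ℛ(g'). -/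

import Mathlib

open Finset Real Filter

noncomputable section

/-- The probability simplex in `ℝ^d`. -/
def simplexS (d : ℕ) : Set (Fin d → ℝ) := stdSimplex ℝ (Fin d)

/-- Transport plans between `α` and `β`: nonnegative matrices with prescribed marginals,
supported where `α i * β j > 0`. -/
def couplings {d : ℕ} (α β : Fin d → ℝ) : Set (Matrix (Fin d) (Fin d) ℝ) :=
  {p | (∀ i j, 0 ≤ p i j) ∧ (∀ i, ∑ j, p i j = α i) ∧ (∀ j, ∑ i, p i j = β j) ∧
    ∀ i j, α i * β j = 0 → p i j = 0}

/-- The entropy-regularized transport cost of a plan `p` (with the convention `0 log 0 = 0`,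
which holds automatically since `Real.log 0 = 0`). -/
def OTcost {d : ℕ} (C : Matrix (Fin d) (Fin d) ℝ) (ε : ℝ) (α β : Fin d → ℝ)
    (p : Matrix (Fin d) (Fin d) ℝ) : ℝ :=
  (∑ i, ∑ j, p i j * C i j) + ε * ∑ i, ∑ j, p i j * Real.log (p i j / (α i * β j))

/-- Entropy-regularized optimal transport cost `OT_{C,ε}(α,β)`. -/
def OT {d : ℕ} (C : Matrix (Fin d) (Fin d) ℝ) (ε : ℝ) (α β : Fin d → ℝ) : ℝ :=
  sInf (OTcost C ε α β '' couplings α β)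

/-- The Sinkhorn negentropy `Ω_C(α) = -(1/2) OT_{C,2}(α,α)`. -/
def Omega {d : ℕ} (C : Matrix (Fin d) (Fin d) ℝ) (α : Fin d → ℝ) : ℝ :=
  -(1 / 2) * OT C 2 α α

open scoped Classical

/-- `Φ_C(α,f) = Σ_{i,j} α_i α_j exp(-(f_i + f_j + c_{ij})/2)`. -/
def Phi {d : ℕ} (C : Matrix (Fin d) (Fin d) ℝ) (α f : Fin d → ℝ) : ℝ :=
  ∑ i, ∑ j, α i * α j * Real.exp (-(f i + f j + C i j) / 2)

/-- The geometric log-sum-exp `Ω_C^*(f) = -log min_{α ∈ △^d} Φ_C(α, f)`. -/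
def OmegaStar {d : ℕ} (C : Matrix (Fin d) (Fin d) ℝ) (f : Fin d → ℝ) : ℝ :=
  -Real.log (sInf ((fun α => Phi C α f) '' simplexS d))

/-- The geometric softmax: the (unique, when the kernel is positive definite) minimizer of
`Φ_C(·, f)` over the simplex. -/
def gsoftmax {d : ℕ} (C : Matrix (Fin d) (Fin d) ℝ) (f : Fin d → ℝ) : Fin d → ℝ :=
  if h : ∃ α ∈ simplexS d, IsMinOn (fun β => Phi C β f) (simplexS d) α
  then h.choose else fun _ => 0

/-- The soft C-transform `T(f,α)_i = -2 log Σ_j α_j exp((f_j - c_{ij})/2)`. -/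
def Tsoft {d : ℕ} (C : Matrix (Fin d) (Fin d) ℝ) (f α : Fin d → ℝ) : Fin d → ℝ :=
  fun i => -2 * Real.log (∑ j, α j * Real.exp ((f j - C i j) / 2))

/-- `f` is the symmetric Sinkhorn potential of `α`: `-f = T(-f, α)`. -/
def IsSinkhornPotential {d : ℕ} (C : Matrix (Fin d) (Fin d) ℝ) (α f : Fin d → ℝ) : Prop :=
  -f = Tsoft C (-f) α

/-- The symmetric Sinkhorn potential `∇Ω(α)`: the (unique, when the kernel is positive
definite) `f` with `-f = T(-f, α)`. -/
def gradOmega {d : ℕ} (C : Matrix (Fin d) (Fin d) ℝ) (α : Fin d → ℝ) : Fin d → ℝ :=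
  if h : ∃ f : Fin d → ℝ, IsSinkhornPotential C α f then h.choose else fun _ => 0

/-- The extrapolation `f^E = -T(-(f - Ω_C^*(f)·1), g-softmax(f)) + Ω_C^*(f)·1`. -/
def extrap {d : ℕ} (C : Matrix (Fin d) (Fin d) ℝ) (f : Fin d → ℝ) : Fin d → ℝ :=
  fun i => -(Tsoft C (fun j => -(f j - OmegaStar C f)) (gsoftmax C f) i) + OmegaStar C f

/-- The kernel matrix `K = (exp(-c_{ij}/2))_{ij}`. -/
def kernelK {d : ℕ} (C : Matrix (Fin d) (Fin d) ℝ) : Matrix (Fin d) (Fin d) ℝ :=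
  Matrix.of fun i j => Real.exp (-(C i j) / 2)

/-- The Fenchel-Young loss `ℓ_Ω(α,f) = Ω_C^*(f) + Ω_C(α) - ⟨α, f⟩`. -/
def FYloss {d : ℕ} (C : Matrix (Fin d) (Fin d) ℝ) (α f : Fin d → ℝ) : ℝ :=
  OmegaStar C f + Omega C α - ∑ i, α i * f i

/-- The asymmetric Hausdorff (Bregman) divergence
`D_Ω(α,β) = Ω_C(α) - Ω_C(β) - ⟨∇Ω(β), α - β⟩`. -/
def DOmega {d : ℕ} (C : Matrix (Fin d) (Fin d) ℝ) (α β : Fin d → ℝ) : ℝ :=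
  Omega C α - Omega C β - ∑ i, gradOmega C β i * (α i - β i)

open MeasureTheory

/-!
Everything rests on the symmetric Sinkhorn equation `u ⊙ K (α ⊙ u) = 1` for `u = exp (-f / 2)`,
which is the potential equation `-f = T(-f, α)`. It has a solution, a critical point of the
coercive dual objective on the functions vanishing off the support of `α`, and only one, by a
comparison principle that uses only the positivity of `K`. For the potential `f` of `α`, the plan
`α_i α_j exp (-(f_i + f_j + c_ij) / 2)` is optimal by Gibbs' inequality, so `Ω_C(α) = ⟨α, f⟩`;
and `Φ_C(·, f) ≥ 1 = Φ_C(α, f)` on the simplex because `K` is positive semidefinite, so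
`Ω_C^*(f) = 0`. Together these give `ℓ_Ω(α, ∇Ω(β)) = D_Ω(α, β)`.

For arbitrary `g`, with `β = g-softmax(g)` and `m = Φ_C(β, g)`, the first-order conditions of the
minimization defining `β` say that `exp (-(g + log m) / 2)` is a supersolution of the equation of
`β`, exact on its support. Comparison gives `g - ∇Ω(β) ≤ -log m = Ω_C^*(g)` coordinatewise, and
pairing with `α` yields `D_Ω(α, β) ≤ ℓ_Ω(α, g)`. Integrating proves (i) and (ii), and these show
that each Bayes risk is bounded by the other. Both `g-softmax` and `∇Ω` have closed graphs, hence
are Borel measurable.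
-/

open Matrix

section QuadraticForm

variable {n : Type*} [Fintype n] {M : Matrix n n ℝ}

theorem Matrix.IsSymm.dotProduct_mulVec_comm (hM : M.IsSymm) (x y : n → ℝ) :
    y ⬝ᵥ M *ᵥ x = x ⬝ᵥ M *ᵥ y := by
  rw [dotProduct_mulVec, ← Matrix.mulVec_transpose, hM.eq, dotProduct_comm]

theorem Matrix.IsSymm.dotProduct_mulVec_add_smul (hM : M.IsSymm) (x z : n → ℝ) (t : ℝ) :
    (x + t • z) ⬝ᵥ M *ᵥ (x + t • z)
      = x ⬝ᵥ M *ᵥ x + 2 * t * (x ⬝ᵥ M *ᵥ z) + t ^ 2 * (z ⬝ᵥ M *ᵥ z) := by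
  simp only [Matrix.mulVec_add, Matrix.mulVec_smul, add_dotProduct, dotProduct_add,
    smul_dotProduct, dotProduct_smul, hM.dotProduct_mulVec_comm z x, smul_eq_mul]
  ring

theorem Matrix.PosSemidef.dotProduct_mulVec_self_nonneg (hM : M.PosSemidef) (x : n → ℝ) :
    0 ≤ x ⬝ᵥ M *ᵥ x := by
  simpa using hM.dotProduct_mulVec_nonneg x

theorem Matrix.PosDef.dotProduct_mulVec_self_pos (hM : M.PosDef) {x : n → ℝ} (hx : x ≠ 0) :
    0 < x ⬝ᵥ M *ᵥ x := by
  simpa using hM.dotProduct_mulVec_pos hx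

theorem mulVec_apply_pos (hM : ∀ i j, 0 < M i j) {v : n → ℝ} (hv : 0 ≤ v) {k : n}
    (hk : 0 < v k) (i : n) : 0 < (M *ᵥ v) i :=
  Finset.sum_pos' (fun j _ => mul_nonneg (hM i j).le (hv j))
    ⟨k, Finset.mem_univ k, mul_pos (hM i k) hk⟩

theorem sum_sq_le_dotProduct_mulVec (hM : ∀ i j, 0 ≤ M i j) (hMd : ∀ i, M i i = 1)
    {v : n → ℝ} (hv : 0 ≤ v) : ∑ i, v i ^ 2 ≤ v ⬝ᵥ M *ᵥ v := by
  refine Finset.sum_le_sum fun i _ => ?_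
  have := Finset.single_le_sum (f := fun j => M i j * v j)
    (fun j _ => mul_nonneg (hM i j) (hv j)) (Finset.mem_univ i)
  simp only [hMd, one_mul] at this
  rw [sq, Matrix.mulVec, dotProduct]
  exact mul_le_mul_of_nonneg_left this (hv i)

end QuadraticForm

section Kernel

variable {d : ℕ} {C : Matrix (Fin d) (Fin d) ℝ}

theorem exists_pos_of_mem_simplexS {α : Fin d → ℝ} (hα : α ∈ simplexS d) : ∃ i, 0 < α i := by
  by_contra! h
  have : ∑ i, α i = 0 := Finset.sum_eq_zero fun i _ => le_antisymm (h i) (hα.1 i)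
  simp [hα.2] at this

theorem kernelK_pos (C : Matrix (Fin d) (Fin d) ℝ) (i j : Fin d) : 0 < kernelK C i j :=
  exp_pos _

theorem kernelK_apply_self (hCdiag : ∀ i, C i i = 0) (i : Fin d) : kernelK C i i = 1 := by
  simp [kernelK, hCdiag i]

theorem kernelK_isSymm (hCsym : C.IsSymm) : (kernelK C).IsSymm :=
  Matrix.IsSymm.ext fun i j => by simp [kernelK, hCsym.apply i j]

def expNegHalf {d : ℕ} (f : Fin d → ℝ) : Fin d → ℝ := fun i => exp (-f i / 2)

theorem expNegHalf_pos (f : Fin d → ℝ) (i : Fin d) : 0 < expNegHalf f i := exp_pos _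

theorem exp_neg_add_half (a b c : ℝ) :
    exp (-(a + b + c) / 2) = exp (-a / 2) * exp (-b / 2) * exp (-c / 2) := by
  rw [← exp_add, ← exp_add]; ring_nf

theorem mulVec_kernelK_apply (β f : Fin d → ℝ) (i : Fin d) :
    (kernelK C *ᵥ (β * expNegHalf f)) i = ∑ j, β j * exp (-(f j + C i j) / 2) := by
  simp only [Matrix.mulVec, dotProduct]
  refine Finset.sum_congr rfl fun j _ => ?_
  simp only [kernelK, expNegHalf, Matrix.of_apply, Pi.mul_apply]
  rw [mul_comm, mul_assoc, ← exp_add]; ring_nf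

theorem Phi_eq_dotProduct (β f : Fin d → ℝ) :
    Phi C β f = (β * expNegHalf f) ⬝ᵥ kernelK C *ᵥ (β * expNegHalf f) := by
  simp only [dotProduct, Matrix.mulVec, Finset.mul_sum]
  refine Finset.sum_congr rfl fun i _ => Finset.sum_congr rfl fun j _ => ?_
  simp only [kernelK, expNegHalf, Matrix.of_apply, Pi.mul_apply, exp_neg_add_half]
  ring

end Kernel

section Potential

variable {d : ℕ} {C : Matrix (Fin d) (Fin d) ℝ} {α β f : Fin d → ℝ}

theorem isSinkhornPotential_iff (hα : α ∈ simplexS d) :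
    IsSinkhornPotential C α f ↔ ∀ i, (kernelK C *ᵥ (α * expNegHalf f)) i = exp (f i / 2) := by
  obtain ⟨k, hk⟩ := exists_pos_of_mem_simplexS hα
  have hpos := mulVec_apply_pos (kernelK_pos C) (v := α * expNegHalf f)
    (fun j => mul_nonneg (hα.1 j) (expNegHalf_pos f j).le) (mul_pos hk (expNegHalf_pos f k))
  simp only [IsSinkhornPotential, Tsoft, funext_iff, Pi.neg_apply]
  refine forall_congr' fun i => ?_
  have hsum : ∑ j, α j * exp ((-f j - C i j) / 2) = (kernelK C *ᵥ (α * expNegHalf f)) i := by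
    rw [mulVec_kernelK_apply]; ring_nf
  rw [hsum]
  constructor
  · intro h
    rw [← exp_log (hpos i)]
    congr 1
    linarith
  · intro h
    rw [h, log_exp]
    ring

theorem IsSinkhornPotential.mulVec_apply (hα : α ∈ simplexS d) (hf : IsSinkhornPotential C α f)
    (i : Fin d) : (kernelK C *ᵥ (α * expNegHalf f)) i = exp (f i / 2) :=
  (isSinkhornPotential_iff hα).1 hf i

theorem IsSinkhornPotential.mul_mulVec_apply (hα : α ∈ simplexS d)
    (hf : IsSinkhornPotential C α f) (i : Fin d) :
    expNegHalf f i * (kernelK C *ᵥ (α * expNegHalf f)) i = 1 := by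
  rw [hf.mulVec_apply hα, expNegHalf, ← exp_add, neg_div, neg_add_cancel, exp_zero]

theorem IsSinkhornPotential.dotProduct_mulVec (hα : α ∈ simplexS d)
    (hf : IsSinkhornPotential C α f) (β : Fin d → ℝ) :
    (β * expNegHalf f) ⬝ᵥ kernelK C *ᵥ (α * expNegHalf f) = ∑ i, β i := by
  simp only [dotProduct, Pi.mul_apply, mul_assoc, hf.mul_mulVec_apply hα, mul_one]

theorem IsSinkhornPotential.Phi_self (hα : α ∈ simplexS d) (hf : IsSinkhornPotential C α f) :
    Phi C α f = 1 := by
  rw [Phi_eq_dotProduct, hf.dotProduct_mulVec hα, hα.2]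

theorem IsSinkhornPotential.one_le_Phi (hCsym : C.IsSymm) (hK : (kernelK C).PosDef)
    (hα : α ∈ simplexS d) (hf : IsSinkhornPotential C α f) (hβ : β ∈ simplexS d) :
    1 ≤ Phi C β f := by
  have h := hK.posSemidef.dotProduct_mulVec_self_nonneg
    (β * expNegHalf f + (-1 : ℝ) • (α * expNegHalf f))
  rw [(kernelK_isSymm hCsym).dotProduct_mulVec_add_smul, hf.dotProduct_mulVec hα, hβ.2,
    ← Phi_eq_dotProduct, ← Phi_eq_dotProduct, hf.Phi_self hα] at h
  linarith

theorem IsSinkhornPotential.OmegaStar_eq_zero (hCsym : C.IsSymm) (hK : (kernelK C).PosDef)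
    (hα : α ∈ simplexS d) (hf : IsSinkhornPotential C α f) : OmegaStar C f = 0 := by
  have h : IsLeast ((fun β => Phi C β f) '' simplexS d) 1 :=
    ⟨⟨α, hα, hf.Phi_self hα⟩, by
      rintro _ ⟨β, hβ, rfl⟩
      exact hf.one_le_Phi hCsym hK hα hβ⟩
  rw [OmegaStar, h.csInf_eq, log_one, neg_zero]

end Potential

theorem sub_mul_exp_le_mul_log_div_sub {p a : ℝ} (hp : 0 ≤ p) (ha : 0 ≤ a) (hpa : a = 0 → p = 0)
    (x : ℝ) : p - a * exp x ≤ p * log (p / a) - p * x := by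
  rcases hp.eq_or_lt with rfl | hp
  · simpa using mul_nonneg ha (exp_pos x).le
  have ha : 0 < a := ha.lt_of_ne fun h => hp.ne' (hpa h.symm)
  have hax : 0 < a * exp x := mul_pos ha (exp_pos x)
  have h := one_sub_inv_le_log_of_pos (div_pos hp hax)
  rw [log_div hp.ne' hax.ne', log_mul ha.ne' (exp_pos x).ne', log_exp, inv_div] at h
  rw [log_div hp.ne' ha.ne']
  have := mul_le_mul_of_nonneg_left h hp.le
  rw [mul_sub, mul_one, mul_div_cancel₀ _ hp.ne'] at this
  linarith

section Omega

variable {d : ℕ} {C : Matrix (Fin d) (Fin d) ℝ} {α f : Fin d → ℝ}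

def sinkhornPlan (C : Matrix (Fin d) (Fin d) ℝ) (α f : Fin d → ℝ) : Matrix (Fin d) (Fin d) ℝ :=
  fun i j => α i * α j * exp (-(f i + f j + C i j) / 2)

theorem IsSinkhornPotential.sum_sinkhornPlan (hα : α ∈ simplexS d)
    (hf : IsSinkhornPotential C α f) (i : Fin d) : ∑ j, sinkhornPlan C α f i j = α i := by
  rw [← mul_one (α i), ← hf.mul_mulVec_apply hα i, Matrix.mulVec, dotProduct, Finset.mul_sum,
    Finset.mul_sum]
  refine Finset.sum_congr rfl fun j _ => ?_
  simp only [sinkhornPlan, kernelK, expNegHalf, Matrix.of_apply, Pi.mul_apply, exp_neg_add_half]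
  ring

theorem sinkhornPlan_comm (hCsym : C.IsSymm) (i j : Fin d) :
    sinkhornPlan C α f i j = sinkhornPlan C α f j i := by
  simp only [sinkhornPlan, hCsym.apply i j]
  ring_nf

theorem IsSinkhornPotential.sinkhornPlan_mem_couplings (hCsym : C.IsSymm) (hα : α ∈ simplexS d)
    (hf : IsSinkhornPotential C α f) : sinkhornPlan C α f ∈ couplings α α := by
  refine ⟨fun i j => by have := hα.1 i; have := hα.1 j; unfold sinkhornPlan; positivity,
    hf.sum_sinkhornPlan hα, fun j => ?_, fun i j h => by simp [sinkhornPlan, h]⟩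
  simp_rw [sinkhornPlan_comm hCsym _ j]
  exact hf.sum_sinkhornPlan hα j

theorem OTcost_add_two_mul_dotProduct {p : Matrix (Fin d) (Fin d) ℝ} (hp : p ∈ couplings α α)
    (f : Fin d → ℝ) :
    OTcost C 2 α α p + 2 * (α ⬝ᵥ f) = 2 * ∑ i, ∑ j,
      (p i j * log (p i j / (α i * α j)) - p i j * (-(f i + f j + C i j) / 2)) := by
  have hrow : ∑ i, ∑ j, p i j * f i = α ⬝ᵥ f := by
    simp only [dotProduct, ← Finset.sum_mul, hp.2.1]
  have hcol : ∑ i, ∑ j, p i j * f j = α ⬝ᵥ f := by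
    rw [Finset.sum_comm]
    simp only [dotProduct, ← Finset.sum_mul, hp.2.2.1]
  have h2 : 2 * (α ⬝ᵥ f) = ∑ i, ∑ j, p i j * f i + ∑ i, ∑ j, p i j * f j := by
    rw [hrow, hcol]; ring
  rw [OTcost, h2]
  simp only [Finset.mul_sum, ← Finset.sum_add_distrib]
  exact Finset.sum_congr rfl fun i _ => Finset.sum_congr rfl fun j _ => by ring

theorem IsSinkhornPotential.OTcost_sinkhornPlan (hCsym : C.IsSymm) (hα : α ∈ simplexS d)
    (hf : IsSinkhornPotential C α f) :
    OTcost C 2 α α (sinkhornPlan C α f) = -2 * (α ⬝ᵥ f) := by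
  have h := OTcost_add_two_mul_dotProduct (C := C) (hf.sinkhornPlan_mem_couplings hCsym hα) f
  have hterm : ∀ i j, sinkhornPlan C α f i j * log (sinkhornPlan C α f i j / (α i * α j))
      - sinkhornPlan C α f i j * (-(f i + f j + C i j) / 2) = 0 := by
    intro i j
    by_cases h0 : α i * α j = 0
    · simp [sinkhornPlan, h0]
    · rw [sinkhornPlan, mul_div_cancel_left₀ _ h0, log_exp, sub_self]
  simp only [hterm, Finset.sum_const_zero, mul_zero] at h
  linarith

theorem IsSinkhornPotential.OTcost_ge (hα : α ∈ simplexS d)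
    (hf : IsSinkhornPotential C α f) {p : Matrix (Fin d) (Fin d) ℝ} (hp : p ∈ couplings α α) :
    -2 * (α ⬝ᵥ f) ≤ OTcost C 2 α α p := by
  have hterm : ∀ i j, p i j - sinkhornPlan C α f i j
      ≤ p i j * log (p i j / (α i * α j)) - p i j * (-(f i + f j + C i j) / 2) :=
    fun i j => sub_mul_exp_le_mul_log_div_sub (hp.1 i j) (mul_nonneg (hα.1 i) (hα.1 j))
      (hp.2.2.2 i j) _
  have hmass : ∑ i, ∑ j, (p i j - sinkhornPlan C α f i j) = 0 := by
    simp only [Finset.sum_sub_distrib, hp.2.1, hf.sum_sinkhornPlan hα, sub_self,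
      Finset.sum_const_zero]
  have := Finset.sum_le_sum fun i (_ : i ∈ Finset.univ) =>
    Finset.sum_le_sum fun j (_ : j ∈ Finset.univ) => hterm i j
  linarith [OTcost_add_two_mul_dotProduct (C := C) hp f]

theorem IsSinkhornPotential.Omega_eq (hCsym : C.IsSymm) (hα : α ∈ simplexS d)
    (hf : IsSinkhornPotential C α f) : Omega C α = α ⬝ᵥ f := by
  have h : IsLeast (OTcost C 2 α α '' couplings α α) (-2 * (α ⬝ᵥ f)) :=
    ⟨⟨_, hf.sinkhornPlan_mem_couplings hCsym hα, hf.OTcost_sinkhornPlan hCsym hα⟩, by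
      rintro _ ⟨p, hp, rfl⟩
      exact hf.OTcost_ge hα hp⟩
  rw [Omega, OT, h.csInf_eq]
  ring

end Omega

section Comparison

variable {n : Type*} [Fintype n] {M : Matrix n n ℝ} {γ : n → ℝ}

theorem mulVec_mul_apply_le_of_le (hM : ∀ i j, 0 ≤ M i j) (hγ : 0 ≤ γ) {a b : n → ℝ}
    (hab : ∀ j, 0 < γ j → a j ≤ b j) (i : n) : (M *ᵥ (γ * a)) i ≤ (M *ᵥ (γ * b)) i := by
  refine Finset.sum_le_sum fun j _ => mul_le_mul_of_nonneg_left ?_ (hM i j)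
  rcases (hγ j).eq_or_lt with h | h
  · simp [← h]
  · exact mul_le_mul_of_nonneg_left (hab j h) h.le

theorem mulVec_mul_apply_lt_of_le_of_lt (hM : ∀ i j, 0 < M i j) (hγ : 0 ≤ γ) {a b : n → ℝ}
    (hab : ∀ j, 0 < γ j → a j ≤ b j) {k : n} (hk : 0 < γ k) (hlt : a k < b k) (i : n) :
    (M *ᵥ (γ * a)) i < (M *ᵥ (γ * b)) i := by
  refine Finset.sum_lt_sum (fun j _ => mul_le_mul_of_nonneg_left ?_ (hM i j).le)
    ⟨k, Finset.mem_univ k, mul_lt_mul_of_pos_left (mul_lt_mul_of_pos_left hlt hk) (hM i k)⟩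
  rcases (hγ j).eq_or_lt with h | h
  · simp [← h]
  · exact mul_le_mul_of_nonneg_left (hab j h) h.le

/-- The ratios `u / w` on the support of `γ` lie between their minimum `ρ` and maximum `R`.
The equation at the minimizer gives `1 ≤ R ρ`; if the ratios were not all equal, the equation at
the maximizer would give `R ρ < 1`, as `M` has positive entries. -/
theorem exists_mul_eq_smul_mul_of_mul_mulVec_eq_one (hM : ∀ i j, 0 < M i j) (hγ : 0 ≤ γ) {k : n}
    (hk : 0 < γ k) {u w : n → ℝ} (hu : ∀ i, 0 < u i) (hw : ∀ i, 0 < w i)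
    (hu1 : ∀ i, u i * (M *ᵥ (γ * u)) i = 1)
    (hw1 : ∀ i, 0 < γ i → w i * (M *ᵥ (γ * w)) i = 1) : ∃ ρ : ℝ, γ * u = ρ • (γ * w) := by
  classical
  set S := Finset.univ.filter (fun i => 0 < γ i)
  have hS : S.Nonempty := ⟨k, by simp [S, hk]⟩
  obtain ⟨i₀, hi₀, hmax⟩ := S.exists_max_image (fun i => u i / w i) hS
  obtain ⟨i₁, hi₁, hmin⟩ := S.exists_min_image (fun i => u i / w i) hS
  simp only [S, Finset.mem_filter, Finset.mem_univ, true_and] at hi₀ hi₁ hmax hmin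
  set R := u i₀ / w i₀
  set ρ := u i₁ / w i₁
  have hR₀ : u i₀ = R * w i₀ := (div_mul_cancel₀ _ (hw i₀).ne').symm
  have hρ₁ : u i₁ = ρ * w i₁ := (div_mul_cancel₀ _ (hw i₁).ne').symm
  have hle : ∀ j, 0 < γ j → u j ≤ (R • w) j := fun j hj => (div_le_iff₀ (hw j)).1 (hmax j hj)
  have hge : ∀ j, 0 < γ j → (ρ • w) j ≤ u j := fun j hj => (le_div_iff₀ (hw j)).1 (hmin j hj)
  have hRρ : 1 ≤ R * ρ := by
    have := mulVec_mul_apply_le_of_le (fun i j => (hM i j).le) hγ hle i₁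
    rw [mul_smul_comm, Matrix.mulVec_smul, Pi.smul_apply, smul_eq_mul] at this
    calc 1 = u i₁ * (M *ᵥ (γ * u)) i₁ := (hu1 i₁).symm
      _ ≤ ρ * w i₁ * (R * (M *ᵥ (γ * w)) i₁) := by
        rw [← hρ₁]; exact mul_le_mul_of_nonneg_left this (hu i₁).le
      _ = R * ρ := by linear_combination R * ρ * hw1 i₁ hi₁
  have hprop : ∀ j, 0 < γ j → u j = ρ * w j := by
    by_contra! ⟨j, hj, hne⟩
    have := mulVec_mul_apply_lt_of_le_of_lt hM hγ hge hj (lt_of_le_of_ne (hge j hj) hne.symm) i₀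
    rw [mul_smul_comm, Matrix.mulVec_smul, Pi.smul_apply, smul_eq_mul] at this
    have : R * ρ < 1 :=
      calc R * ρ = R * w i₀ * (ρ * (M *ᵥ (γ * w)) i₀) := by
            linear_combination -(R * ρ) * hw1 i₀ hi₀
        _ < u i₀ * (M *ᵥ (γ * u)) i₀ := by
          rw [← hR₀]; exact mul_lt_mul_of_pos_left this (hu i₀)
        _ = 1 := hu1 i₀
    linarith
  refine ⟨ρ, funext fun j => ?_⟩
  rcases (hγ j).eq_or_lt with h | h
  · simp [← h]
  · simp [hprop j h]; ring

theorem le_of_mul_mulVec_eq_one (hM : ∀ i j, 0 < M i j) (hγ : 0 ≤ γ) {k : n}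
    (hk : 0 < γ k) {u w : n → ℝ} (hu : ∀ i, 0 < u i) (hw : ∀ i, 0 < w i)
    (hu1 : ∀ i, u i * (M *ᵥ (γ * u)) i = 1) (hw1 : ∀ i, 1 ≤ w i * (M *ᵥ (γ * w)) i)
    (hw1' : ∀ i, 0 < γ i → w i * (M *ᵥ (γ * w)) i = 1) : u ≤ w := by
  obtain ⟨ρ, hρ⟩ := exists_mul_eq_smul_mul_of_mul_mulVec_eq_one hM hγ hk hu hw hu1 hw1'
  have hρk : u k = ρ * w k := by
    have := congrFun hρ k
    simp only [Pi.mul_apply, Pi.smul_apply, smul_eq_mul] at this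
    exact mul_left_cancel₀ hk.ne' (by linear_combination this)
  have hρ1 : ρ = 1 := by
    have h := hu1 k
    rw [hρ, Matrix.mulVec_smul, Pi.smul_apply, smul_eq_mul, hρk,
      show ρ * w k * (ρ * (M *ᵥ (γ * w)) k) = ρ ^ 2 * (w k * (M *ᵥ (γ * w)) k) by ring,
      hw1' k hk, mul_one] at h
    nlinarith [hu k, hw k]
  have hMw : ∀ i, 0 < (M *ᵥ (γ * w)) i :=
    mulVec_apply_pos hM (fun j => mul_nonneg (hγ j) (hw j).le) (mul_pos hk (hw k))
  intro i
  have h := hu1 i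
  rw [hρ, hρ1, one_smul] at h
  exact le_of_mul_le_mul_right (by linarith [hw1 i]) (hMw i)

end Comparison

theorem mul_abs_sub_two_le {b : ℝ} (hb : 0 ≤ b) (s : ℝ) :
    b * |s| - 2 ≤ (b * exp s) ^ 2 / 2 - b * s := by
  rcases le_total s 0 with hs | hs
  · rw [abs_of_nonpos hs]
    nlinarith [sq_nonneg (b * exp s)]
  · rw [abs_of_nonneg hs]
    have : b * s ≤ b * exp s := mul_le_mul_of_nonneg_left (by linarith [add_one_le_exp s]) hb
    nlinarith [sq_nonneg (b * exp s - 2)]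

section Existence

variable {d : ℕ} {C : Matrix (Fin d) (Fin d) ℝ} {α : Fin d → ℝ}

/-- The dual objective of the symmetric entropic problem, in the variable `t = -f / 2`. -/
def sinkhornDual (C : Matrix (Fin d) (Fin d) ℝ) (α t : Fin d → ℝ) : ℝ :=
  (α * (exp ∘ t)) ⬝ᵥ kernelK C *ᵥ (α * (exp ∘ t)) / 2 - α ⬝ᵥ t

def vanishOffSupport (α : Fin d → ℝ) : Set (Fin d → ℝ) := {t | ∀ i, α i = 0 → t i = 0}

theorem isClosed_vanishOffSupport (α : Fin d → ℝ) : IsClosed (vanishOffSupport α) := by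
  simp only [vanishOffSupport, Set.ofPred_forall]
  exact isClosed_iInter fun i => isClosed_iInter fun _ =>
    isClosed_eq (continuous_apply i) continuous_const

theorem continuous_sinkhornDual : Continuous (sinkhornDual C α) := by
  unfold sinkhornDual
  fun_prop

theorem sinkhornDual_ge (hCdiag : ∀ i, C i i = 0) (hα : 0 ≤ α) {a : ℝ} (ha : 0 < a)
    (haα : ∀ i, 0 < α i → a ≤ α i) {t : Fin d → ℝ} (ht : t ∈ vanishOffSupport α) :
    a * ‖t‖ - 2 * d ≤ sinkhornDual C α t := by
  have hquad := sum_sq_le_dotProduct_mulVec (fun i j => (kernelK_pos C i j).le)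
    (kernelK_apply_self hCdiag) (v := α * (exp ∘ t))
    (fun i => mul_nonneg (hα i) (exp_pos _).le)
  have hsum : 0 ≤ ∑ i, α i * |t i| := Finset.sum_nonneg fun j _ => mul_nonneg (hα j) (abs_nonneg _)
  have hnorm : a * ‖t‖ ≤ ∑ i, α i * |t i| := by
    rw [← le_div_iff₀' ha, pi_norm_le_iff_of_nonneg (div_nonneg hsum ha.le)]
    intro i
    rw [Real.norm_eq_abs, le_div_iff₀' ha]
    rcases (hα i).eq_or_lt with h | h
    · simpa [ht i h.symm] using hsum
    · exact (mul_le_mul_of_nonneg_right (haα i h) (abs_nonneg _)).trans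
        (Finset.single_le_sum (f := fun j => α j * |t j|)
          (fun j _ => mul_nonneg (hα j) (abs_nonneg _)) (Finset.mem_univ i))
  have hsep := Finset.sum_le_sum fun i (_ : i ∈ Finset.univ) => mul_abs_sub_two_le (hα i) (t i)
  simp only [Finset.sum_sub_distrib, Finset.sum_const, Finset.card_univ, Fintype.card_fin,
    nsmul_eq_mul, ← Finset.sum_div] at hsep
  simp only [Pi.mul_apply, Function.comp_apply] at hquad
  have hlin : α ⬝ᵥ t = ∑ i, α i * t i := rfl
  rw [sinkhornDual, hlin]
  linarith

theorem exists_isMinOn_sinkhornDual (hCdiag : ∀ i, C i i = 0) (hα : α ∈ simplexS d) :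
    ∃ t ∈ vanishOffSupport α, IsMinOn (sinkhornDual C α) (vanishOffSupport α) t := by
  classical
  obtain ⟨k, hk⟩ := exists_pos_of_mem_simplexS hα
  obtain ⟨i₀, hi₀, hmin⟩ := (Finset.univ.filter (0 < α ·)).exists_min_image α ⟨k, by simpa⟩
  simp only [Finset.mem_filter, Finset.mem_univ, true_and] at hi₀ hmin
  refine continuous_sinkhornDual.continuousOn.exists_isMinOn' (isClosed_vanishOffSupport α)
    (x₀ := 0) (fun _ _ => rfl) ?_
  rw [Filter.eventually_inf_principal]
  filter_upwards [tendsto_norm_cocompact_atTop.eventually_ge_atTop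
    ((sinkhornDual C α 0 + 2 * d) / α i₀)] with t ht htV
  have := sinkhornDual_ge hCdiag hα.1 hi₀ hmin htV
  rw [div_le_iff₀' hi₀] at ht
  linarith

theorem sinkhornDual_add_smul_single (hCsym : C.IsSymm) (hCdiag : ∀ i, C i i = 0)
    (t : Fin d → ℝ) (i : Fin d) (s : ℝ) :
    sinkhornDual C α (t + s • Pi.single i 1) = sinkhornDual C α t
      + (exp s - 1) * (α i * exp (t i)) * (kernelK C *ᵥ (α * (exp ∘ t))) i
      + ((exp s - 1) * (α i * exp (t i))) ^ 2 / 2 - s * α i := by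
  classical
  have hv : α * (exp ∘ (t + s • Pi.single i 1))
      = α * (exp ∘ t) + ((exp s - 1) * (α i * exp (t i))) • Pi.single i 1 := by
    funext j
    by_cases h : j = i
    · subst h
      simp [exp_add]
      ring
    · simp [h]
  have hsymm := kernelK_isSymm hCsym
  rw [sinkhornDual, sinkhornDual, hv, hsymm.dotProduct_mulVec_add_smul,
    hsymm.dotProduct_mulVec_comm (Pi.single i 1), single_dotProduct, mulVec_single_one,
    single_dotProduct, col_apply, kernelK_apply_self hCdiag, dotProduct_add, dotProduct_smul,
    dotProduct_single]
  simp only [smul_eq_mul]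
  ring

theorem exp_mul_mulVec_apply_eq_one (hCsym : C.IsSymm) (hCdiag : ∀ i, C i i = 0) {t : Fin d → ℝ}
    (hmin : IsMinOn (sinkhornDual C α) (vanishOffSupport α) t) (ht : t ∈ vanishOffSupport α)
    {i : Fin d} (hi : 0 < α i) :
    exp (t i) * (kernelK C *ᵥ (α * (exp ∘ t))) i = 1 := by
  classical
  set A := (kernelK C *ᵥ (α * (exp ∘ t))) i
  set c := α i * exp (t i)
  have hloc : IsLocalMin (fun s => (exp s - 1) * c * A + ((exp s - 1) * c) ^ 2 / 2 - s * α i) 0 :=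
    Filter.Eventually.of_forall fun s => by
      have hs : t + s • Pi.single i 1 ∈ vanishOffSupport α := fun j hj => by
        have hji : j ≠ i := fun h => by rw [h] at hj; exact hi.ne' hj
        simp [ht j hj, hji]
      have := hmin hs
      rw [Set.mem_ofPred_eq, sinkhornDual_add_smul_single hCsym hCdiag] at this
      simp only [exp_zero, sub_self, zero_mul, ne_eq, OfNat.ofNat_ne_zero, not_false_eq_true,
        zero_pow, zero_div, add_zero]
      linarith
  have hc : HasDerivAt (fun s => (exp s - 1) * c) c 0 := by
    simpa using ((hasDerivAt_exp 0).sub_const 1).mul_const c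
  have hderiv := ((hc.mul_const A).add ((hc.pow 2).div_const 2)).sub
    ((hasDerivAt_id 0).mul_const (α i))
  have := hloc.hasDerivAt_eq_zero hderiv
  simp only [exp_zero, sub_self, zero_mul, one_mul] at this
  have : α i * (exp (t i) * A) = α i * 1 := by linear_combination this
  exact mul_left_cancel₀ hi.ne' this

theorem exists_isSinkhornPotential (hCsym : C.IsSymm) (hCdiag : ∀ i, C i i = 0)
    (hα : α ∈ simplexS d) : ∃ f, IsSinkhornPotential C α f := by
  obtain ⟨t, ht, hmin⟩ := exists_isMinOn_sinkhornDual (C := C) hCdiag hα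
  obtain ⟨k, hk⟩ := exists_pos_of_mem_simplexS hα
  set v := α * (exp ∘ t)
  have hpos : ∀ i, 0 < (kernelK C *ᵥ v) i := mulVec_apply_pos (kernelK_pos C)
    (fun j => mul_nonneg (hα.1 j) (exp_pos _).le) (mul_pos hk (exp_pos (t k)))
  refine ⟨fun i => 2 * log ((kernelK C *ᵥ v) i), (isSinkhornPotential_iff hα).2 fun i => ?_⟩
  have hv : α * expNegHalf (fun i => 2 * log ((kernelK C *ᵥ v) i)) = v := by
    funext j
    rcases (hα.1 j).eq_or_lt with h | h
    · simp [v, ← h]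
    · have := exp_mul_mulVec_apply_eq_one hCsym hCdiag hmin ht h
      simp only [Pi.mul_apply, expNegHalf, v, Function.comp_apply]
      rw [show -(2 * log ((kernelK C *ᵥ v) j)) / 2 = -log ((kernelK C *ᵥ v) j) by ring,
        exp_neg, exp_log (hpos j), ← eq_inv_of_mul_eq_one_left this]
  rw [hv, show 2 * log ((kernelK C *ᵥ v) i) / 2 = log ((kernelK C *ᵥ v) i) by ring,
    exp_log (hpos i)]

end Existence

section GradOmega

variable {d : ℕ} {C : Matrix (Fin d) (Fin d) ℝ} {α f g : Fin d → ℝ}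

theorem IsSinkhornPotential.expNegHalf_le (hα : α ∈ simplexS d) (hf : IsSinkhornPotential C α f)
    (hg : IsSinkhornPotential C α g) : expNegHalf f ≤ expNegHalf g :=
  have ⟨_, hk⟩ := exists_pos_of_mem_simplexS hα
  le_of_mul_mulVec_eq_one (kernelK_pos C) hα.1 hk (expNegHalf_pos f) (expNegHalf_pos g)
    (hf.mul_mulVec_apply hα) (fun i => (hg.mul_mulVec_apply hα i).ge)
    (fun i _ => hg.mul_mulVec_apply hα i)

theorem IsSinkhornPotential.unique (hα : α ∈ simplexS d) (hf : IsSinkhornPotential C α f)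
    (hg : IsSinkhornPotential C α g) : f = g := by
  funext i
  have := le_antisymm (hf.expNegHalf_le hα hg i) (hg.expNegHalf_le hα hf i)
  simp only [expNegHalf, exp_eq_exp] at this
  linarith

theorem isSinkhornPotential_gradOmega (hCsym : C.IsSymm) (hCdiag : ∀ i, C i i = 0)
    (hα : α ∈ simplexS d) : IsSinkhornPotential C α (gradOmega C α) := by
  have h := exists_isSinkhornPotential hCsym hCdiag hα
  rw [gradOmega, dif_pos h]
  exact h.choose_spec

end GradOmega

theorem nonneg_of_forall_mem_Ioc_nonneg_add_mul {A B : ℝ}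
    (h : ∀ s ∈ Set.Ioc (0 : ℝ) 1, 0 ≤ A + s * B) : 0 ≤ A :=
  ge_of_tendsto
    ((Continuous.tendsto' (f := fun s => A + s * B) (by fun_prop) 0 A (by simp)).mono_left
      nhdsWithin_le_nhds)
    (Filter.mem_of_superset (Ioc_mem_nhdsGT one_pos) h)

section Gsoftmax

variable {d : ℕ} {C : Matrix (Fin d) (Fin d) ℝ} {β γ f : Fin d → ℝ}

theorem Phi_add_smul_sub (hCsym : C.IsSymm) (β γ f : Fin d → ℝ) (s : ℝ) :
    Phi C (β + s • (γ - β)) f = Phi C β f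
      + 2 * s * ((β * expNegHalf f) ⬝ᵥ kernelK C *ᵥ ((γ - β) * expNegHalf f))
      + s ^ 2 * (((γ - β) * expNegHalf f) ⬝ᵥ kernelK C *ᵥ ((γ - β) * expNegHalf f)) := by
  rw [Phi_eq_dotProduct, Phi_eq_dotProduct, add_mul, smul_mul_assoc,
    (kernelK_isSymm hCsym).dotProduct_mulVec_add_smul]

theorem Phi_le_of_isMinOn (hCsym : C.IsSymm) (hγ : γ ∈ simplexS d)
    (hmin : IsMinOn (fun β => Phi C β f) (simplexS d) γ) (i : Fin d) :
    Phi C γ f ≤ expNegHalf f i * (kernelK C *ᵥ (γ * expNegHalf f)) i := by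
  classical
  set u := expNegHalf f
  have hdir : ∀ s ∈ Set.Ioc (0 : ℝ) 1, 0 ≤ 2 * ((γ * u) ⬝ᵥ kernelK C *ᵥ ((Pi.single i 1 - γ) * u))
      + s * (((Pi.single i 1 - γ) * u) ⬝ᵥ kernelK C *ᵥ ((Pi.single i 1 - γ) * u)) := by
    intro s hs
    have : Phi C γ f ≤ Phi C (γ + s • (Pi.single i 1 - γ)) f :=
      hmin ((convex_stdSimplex ℝ (Fin d)).add_smul_sub_mem hγ (single_mem_stdSimplex ℝ i)
        (Set.Ioc_subset_Icc_self hs))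
    rw [Phi_add_smul_sub hCsym] at this
    exact (mul_nonneg_iff_of_pos_left hs.1).1 (by nlinarith)
  have hB := nonneg_of_forall_mem_Ioc_nonneg_add_mul hdir
  rw [sub_mul, Matrix.mulVec_sub, dotProduct_sub,
    (kernelK_isSymm hCsym).dotProduct_mulVec_comm (Pi.single i 1 * u), ← Pi.single_mul_left,
    one_mul, single_dotProduct, ← Phi_eq_dotProduct] at hB
  linarith

theorem eq_Phi_of_isMinOn (hCsym : C.IsSymm) (hγ : γ ∈ simplexS d)
    (hmin : IsMinOn (fun β => Phi C β f) (simplexS d) γ) {i : Fin d} (hi : 0 < γ i) :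
    expNegHalf f i * (kernelK C *ᵥ (γ * expNegHalf f)) i = Phi C γ f := by
  have hle := Phi_le_of_isMinOn hCsym hγ hmin
  have hsum : ∑ j, γ j * (expNegHalf f j * (kernelK C *ᵥ (γ * expNegHalf f)) j - Phi C γ f)
      = 0 := by
    simp only [mul_sub, Finset.sum_sub_distrib, ← Finset.sum_mul, hγ.2, one_mul]
    rw [Phi_eq_dotProduct, sub_eq_zero]
    simp only [dotProduct, Pi.mul_apply, mul_assoc]
  have := (Finset.sum_eq_zero_iff_of_nonneg fun j _ =>
    mul_nonneg (hγ.1 j) (sub_nonneg.2 (hle j))).1 hsum i (Finset.mem_univ i)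
  rcases mul_eq_zero.1 this with h | h
  · exact absurd h hi.ne'
  · linarith

theorem eq_of_isMinOn_Phi (hCsym : C.IsSymm) (hK : (kernelK C).PosDef) (hβ : β ∈ simplexS d)
    (hγ : γ ∈ simplexS d) (hminβ : IsMinOn (fun β => Phi C β f) (simplexS d) β)
    (hminγ : IsMinOn (fun β => Phi C β f) (simplexS d) γ) : β = γ := by
  by_contra hne
  have hz : (γ - β) * expNegHalf f ≠ 0 := fun h => hne <| funext fun j => by
    have := congrFun h j
    simp only [Pi.mul_apply, Pi.sub_apply, Pi.zero_apply, mul_eq_zero,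
      (expNegHalf_pos f j).ne', or_false] at this
    linarith
  have hQ := hK.dotProduct_mulVec_self_pos hz
  have hγβ : Phi C γ f ≤ Phi C β f := hminγ hβ
  have hmid : Phi C β f ≤ Phi C (β + (1 / 2 : ℝ) • (γ - β)) f :=
    hminβ ((convex_stdSimplex ℝ (Fin d)).add_smul_sub_mem hβ hγ (by norm_num))
  have hone := Phi_add_smul_sub hCsym β γ f 1
  rw [one_smul, add_sub_cancel] at hone
  rw [Phi_add_smul_sub hCsym] at hmid
  nlinarith

variable [NeZero d]

theorem exists_isMinOn_Phi (C : Matrix (Fin d) (Fin d) ℝ) (f : Fin d → ℝ) :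
    ∃ α ∈ simplexS d, IsMinOn (fun β => Phi C β f) (simplexS d) α :=
  (isCompact_stdSimplex ℝ (Fin d)).exists_isMinOn ⟨_, single_mem_stdSimplex ℝ 0⟩
    (by unfold Phi; fun_prop)

theorem gsoftmax_mem (f : Fin d → ℝ) : gsoftmax C f ∈ simplexS d := by
  rw [gsoftmax, dif_pos (exists_isMinOn_Phi C f)]
  exact (exists_isMinOn_Phi C f).choose_spec.1

theorem isMinOn_gsoftmax (f : Fin d → ℝ) :
    IsMinOn (fun β => Phi C β f) (simplexS d) (gsoftmax C f) := by
  rw [gsoftmax, dif_pos (exists_isMinOn_Phi C f)]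
  exact (exists_isMinOn_Phi C f).choose_spec.2

theorem Phi_gsoftmax_pos (hK : (kernelK C).PosDef) (f : Fin d → ℝ) :
    0 < Phi C (gsoftmax C f) f := by
  obtain ⟨k, hk⟩ := exists_pos_of_mem_simplexS (gsoftmax_mem (C := C) f)
  rw [Phi_eq_dotProduct]
  exact hK.dotProduct_mulVec_self_pos fun h =>
    (mul_pos hk (expNegHalf_pos f k)).ne' (congrFun h k)

theorem OmegaStar_eq_neg_log_Phi_gsoftmax (f : Fin d → ℝ) :
    OmegaStar C f = -log (Phi C (gsoftmax C f) f) := by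
  have h : IsLeast ((fun β => Phi C β f) '' simplexS d) (Phi C (gsoftmax C f) f) :=
    ⟨⟨_, gsoftmax_mem f, rfl⟩, by
      rintro _ ⟨β, hβ, rfl⟩
      exact isMinOn_gsoftmax f hβ⟩
  rw [OmegaStar, h.csInf_eq]

theorem sub_gradOmega_gsoftmax_le (hCsym : C.IsSymm) (hCdiag : ∀ i, C i i = 0)
    (hK : (kernelK C).PosDef) (f : Fin d → ℝ) (i : Fin d) :
    f i - gradOmega C (gsoftmax C f) i ≤ -log (Phi C (gsoftmax C f) f) := by
  set γ := gsoftmax C f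
  set m := Phi C γ f
  have hm : 0 < m := Phi_gsoftmax_pos hK f
  have hγ : γ ∈ simplexS d := gsoftmax_mem f
  have hmin := isMinOn_gsoftmax (C := C) f
  obtain ⟨k, hk⟩ := exists_pos_of_mem_simplexS hγ
  have hw : ∀ j, expNegHalf (fun j => f j + log m) j
      * (kernelK C *ᵥ (γ * expNegHalf (fun j => f j + log m))) j
      = expNegHalf f j * (kernelK C *ᵥ (γ * expNegHalf f)) j / m := by
    have hscale : expNegHalf (fun j => f j + log m) = exp (-log m / 2) • expNegHalf f := by
      funext j
      simp only [expNegHalf, Pi.smul_apply, smul_eq_mul, ← exp_add]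
      ring_nf
    have hsq : exp (-log m / 2) * exp (-log m / 2) = m⁻¹ := by
      rw [← exp_add, show -log m / 2 + -log m / 2 = -log m by ring, exp_neg, exp_log hm]
    intro j
    rw [hscale, mul_smul_comm, Matrix.mulVec_smul]
    simp only [Pi.smul_apply, smul_eq_mul]
    linear_combination expNegHalf f j * (kernelK C *ᵥ (γ * expNegHalf f)) j * hsq
  have hle := le_of_mul_mulVec_eq_one (kernelK_pos C) hγ.1 hk
    (expNegHalf_pos _) (expNegHalf_pos _)
    ((isSinkhornPotential_gradOmega hCsym hCdiag hγ).mul_mulVec_apply hγ)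
    (fun j => by rw [hw, le_div_iff₀ hm, one_mul]; exact Phi_le_of_isMinOn hCsym hγ hmin j)
    (fun j hj => by rw [hw, eq_Phi_of_isMinOn hCsym hγ hmin hj, div_self hm.ne']) i
  simp only [expNegHalf, exp_le_exp] at hle
  linarith

end Gsoftmax

section Pointwise

variable {d : ℕ} {C : Matrix (Fin d) (Fin d) ℝ} {α β : Fin d → ℝ}

theorem DOmega_eq (hCsym : C.IsSymm) (hCdiag : ∀ i, C i i = 0) (hβ : β ∈ simplexS d) :
    DOmega C α β = Omega C α - α ⬝ᵥ gradOmega C β := by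
  rw [DOmega, (isSinkhornPotential_gradOmega hCsym hCdiag hβ).Omega_eq hCsym hβ]
  simp only [dotProduct, mul_sub, Finset.sum_sub_distrib]
  simp only [mul_comm (gradOmega C β _)]
  ring

theorem FYloss_gradOmega (hCsym : C.IsSymm) (hCdiag : ∀ i, C i i = 0) (hK : (kernelK C).PosDef)
    (hβ : β ∈ simplexS d) : FYloss C α (gradOmega C β) = DOmega C α β := by
  rw [FYloss, DOmega_eq hCsym hCdiag hβ,
    (isSinkhornPotential_gradOmega hCsym hCdiag hβ).OmegaStar_eq_zero hCsym hK hβ, zero_add]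
  rfl

variable [NeZero d]

theorem DOmega_gsoftmax_le_FYloss (hCsym : C.IsSymm) (hCdiag : ∀ i, C i i = 0)
    (hK : (kernelK C).PosDef) (hα : α ∈ simplexS d) (f : Fin d → ℝ) :
    DOmega C α (gsoftmax C f) ≤ FYloss C α f := by
  have h := Finset.sum_le_sum fun i (_ : i ∈ Finset.univ) => mul_le_mul_of_nonneg_left
    (sub_gradOmega_gsoftmax_le hCsym hCdiag hK f i) (hα.1 i)
  rw [← Finset.sum_mul, hα.2, one_mul] at h
  rw [DOmega_eq hCsym hCdiag (gsoftmax_mem f), FYloss, OmegaStar_eq_neg_log_Phi_gsoftmax]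
  simp only [dotProduct, mul_sub, Finset.sum_sub_distrib] at h ⊢
  linarith

end Pointwise

theorem Measurable.comp_of_isClosed_graph {X Y Z : Type*} [TopologicalSpace X] [PolishSpace X]
    [MeasurableSpace X] [BorelSpace X] [TopologicalSpace Y] [PolishSpace Y] [MeasurableSpace Y]
    [BorelSpace Y] [MeasurableSpace Z] {s : Set X} {φ : X → Y}
    (hφ : IsClosed {p : X × Y | p.1 ∈ s ∧ p.2 = φ p.1}) {g : Z → X} (hg : Measurable g)
    (hgs : ∀ z, g z ∈ s) : Measurable fun z => φ (g z) := by
  intro B hB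
  have hpre : (fun z => φ (g z)) ⁻¹' B
      = g ⁻¹' (Prod.fst '' ({p : X × Y | p.1 ∈ s ∧ p.2 = φ p.1} ∩ Set.univ ×ˢ B)) := by
    ext z
    constructor
    · intro hz
      exact ⟨(g z, φ (g z)), ⟨⟨hgs z, rfl⟩, trivial, hz⟩, rfl⟩
    · rintro ⟨p, ⟨⟨-, hp⟩, -, hpB⟩, hpz⟩
      rwa [Set.mem_preimage, ← hpz, ← hp]
  rw [hpre]
  refine hg ((hφ.measurableSet.inter (MeasurableSet.univ.prod hB)).image_of_continuousOn_injOn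
    continuous_fst.continuousOn ?_)
  rintro p ⟨⟨-, hp⟩, -⟩ q ⟨⟨-, hq⟩, -⟩ h
  exact Prod.ext h (by rw [hp, hq, h])

section Measurability

variable {d : ℕ} {C : Matrix (Fin d) (Fin d) ℝ} {Z : Type*} [MeasurableSpace Z]

theorem Measurable.gradOmega_comp (hCsym : C.IsSymm) (hCdiag : ∀ i, C i i = 0)
    {β : Z → Fin d → ℝ} (hβ : Measurable β) (hβs : ∀ z, β z ∈ simplexS d) :
    Measurable fun z => gradOmega C (β z) := by
  refine hβ.comp_of_isClosed_graph ?_ hβs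
  have hgraph : {p : (Fin d → ℝ) × (Fin d → ℝ) | p.1 ∈ simplexS d ∧ p.2 = gradOmega C p.1}
      = {p | p.1 ∈ simplexS d} ∩
        ⋂ i, {p | (kernelK C *ᵥ (p.1 * expNegHalf p.2)) i = exp (p.2 i / 2)} := by
    ext ⟨α, f⟩
    simp only [Set.mem_ofPred_eq, Set.mem_inter_iff, Set.mem_iInter]
    refine and_congr_right fun hα => ?_
    rw [← isSinkhornPotential_iff hα]
    exact ⟨fun h => h ▸ isSinkhornPotential_gradOmega hCsym hCdiag hα,
      fun h => h.unique hα (isSinkhornPotential_gradOmega hCsym hCdiag hα)⟩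
  rw [hgraph]
  exact ((isClosed_stdSimplex ℝ (Fin d)).preimage continuous_fst).inter <|
    isClosed_iInter fun i => isClosed_eq (by unfold expNegHalf; fun_prop) (by fun_prop)

theorem Measurable.gsoftmax_comp [NeZero d] (hCsym : C.IsSymm) (hK : (kernelK C).PosDef)
    {g : Z → Fin d → ℝ} (hg : Measurable g) : Measurable fun z => gsoftmax C (g z) := by
  refine hg.comp_of_isClosed_graph (s := Set.univ) ?_ fun _ => trivial
  have hgraph : {p : (Fin d → ℝ) × (Fin d → ℝ) | p.1 ∈ Set.univ ∧ p.2 = gsoftmax C p.1}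
      = {p | p.2 ∈ simplexS d} ∩
        ⋂ β ∈ simplexS d, {p | Phi C p.2 p.1 ≤ Phi C β p.1} := by
    ext ⟨f, γ⟩
    simp only [Set.mem_ofPred_eq, Set.mem_univ, true_and, Set.mem_inter_iff, Set.mem_iInter]
    exact ⟨fun h => h ▸ ⟨gsoftmax_mem f, fun β hβ => isMinOn_gsoftmax f hβ⟩,
      fun ⟨hγ, hmin⟩ => eq_of_isMinOn_Phi hCsym hK hγ (gsoftmax_mem f) hmin (isMinOn_gsoftmax f)⟩
  rw [hgraph]
  exact ((isClosed_stdSimplex ℝ (Fin d)).preimage continuous_snd).inter <|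
    isClosed_biInter fun β _ => isClosed_le (by unfold Phi; fun_prop) (by unfold Phi; fun_prop)

end Measurability

theorem g_logistic_loss_calibration_general (d : ℕ) (hd : 1 ≤ d)
    (C : Matrix (Fin d) (Fin d) ℝ) (hCsym : C.IsSymm) (hCdiag : ∀ i, C i i = 0)
    (hK : (kernelK C).PosDef)
    (X : Type*) [MeasurableSpace X]
    (ρ : Measure (X × (Fin d → ℝ)))
    (hρ : ∀ᵐ q ∂ρ, q.2 ∈ simplexS d)
    (hIntR : ∀ g : X → Fin d → ℝ, Measurable g →
      Integrable (fun q : X × (Fin d → ℝ) => FYloss C q.2 (g q.1)) ρ)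
    (hIntE : ∀ β : X → Fin d → ℝ, Measurable β → (∀ x, β x ∈ simplexS d) →
      Integrable (fun q : X × (Fin d → ℝ) => DOmega C q.2 (β q.1)) ρ) :
    (∀ β : X → Fin d → ℝ, Measurable β → (∀ x, β x ∈ simplexS d) →
      ∫ q, FYloss C q.2 (gradOmega C (β q.1)) ∂ρ = ∫ q, DOmega C q.2 (β q.1) ∂ρ) ∧
    (∀ g : X → Fin d → ℝ, Measurable g →
      ∫ q, DOmega C q.2 (gsoftmax C (g q.1)) ∂ρ ≤ ∫ q, FYloss C q.2 (g q.1) ∂ρ) ∧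
    sInf {r : ℝ | ∃ β : X → Fin d → ℝ, Measurable β ∧ (∀ x, β x ∈ simplexS d) ∧
        r = ∫ q, DOmega C q.2 (β q.1) ∂ρ}
      = sInf {r : ℝ | ∃ g : X → Fin d → ℝ, Measurable g ∧
        r = ∫ q, FYloss C q.2 (g q.1) ∂ρ} ∧
    ∀ g : X → Fin d → ℝ, Measurable g →
      (∫ q, DOmega C q.2 (gsoftmax C (g q.1)) ∂ρ) -
        sInf {r : ℝ | ∃ β : X → Fin d → ℝ, Measurable β ∧ (∀ x, β x ∈ simplexS d) ∧
          r = ∫ q, DOmega C q.2 (β q.1) ∂ρ}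
      ≤ (∫ q, FYloss C q.2 (g q.1) ∂ρ) -
        sInf {r : ℝ | ∃ g' : X → Fin d → ℝ, Measurable g' ∧
          r = ∫ q, FYloss C q.2 (g' q.1) ∂ρ} := by
  have : NeZero d := ⟨by omega⟩
  have hA : ∀ β : X → Fin d → ℝ, Measurable β → (∀ x, β x ∈ simplexS d) →
      ∫ q, FYloss C q.2 (gradOmega C (β q.1)) ∂ρ = ∫ q, DOmega C q.2 (β q.1) ∂ρ :=
    fun β _ hβs => integral_congr_ae <|
      hρ.mono fun q _ => FYloss_gradOmega hCsym hCdiag hK (hβs q.1)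
  have hB : ∀ g : X → Fin d → ℝ, Measurable g →
      ∫ q, DOmega C q.2 (gsoftmax C (g q.1)) ∂ρ ≤ ∫ q, FYloss C q.2 (g q.1) ∂ρ :=
    fun g hg => integral_mono_ae
      (hIntE (fun x => gsoftmax C (g x)) (hg.gsoftmax_comp hCsym hK) fun x => gsoftmax_mem (g x))
      (hIntR g hg) (hρ.mono fun q hq => DOmega_gsoftmax_le_FYloss hCsym hCdiag hK hq (g q.1))
  have hinf : sInf {r : ℝ | ∃ β : X → Fin d → ℝ, Measurable β ∧ (∀ x, β x ∈ simplexS d) ∧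
        r = ∫ q, DOmega C q.2 (β q.1) ∂ρ}
      = sInf {r : ℝ | ∃ g : X → Fin d → ℝ, Measurable g ∧
        r = ∫ q, FYloss C q.2 (g q.1) ∂ρ} := by
    refine csInf_eq_csInf_of_forall_exists_le ?_ ?_
    · rintro _ ⟨β, hβ, hβs, rfl⟩
      exact ⟨_, ⟨_, hβ.gradOmega_comp hCsym hCdiag hβs, rfl⟩, (hA β hβ hβs).le⟩
    · rintro _ ⟨g, hg, rfl⟩
      exact ⟨_, ⟨_, hg.gsoftmax_comp hCsym hK, fun x => gsoftmax_mem (g x), rfl⟩, hB g hg⟩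
  refine ⟨hA, hB, hinf, fun g hg => ?_⟩
  rw [hinf]
  exact sub_le_sub_right (hB g hg) _

/-- Calibration of the geometric logistic loss: with risks
`ℛ(g) = ∫ ℓ_Ω(α, g(x)) dρ` and `ℰ(β) = ∫ D_Ω(α, β(x)) dρ` (assumed to exist, i.e. the
integrands are integrable), (i) `ℛ(∇Ω ∘ β) = ℰ(β)` for measurable simplex-valued `β`;
(ii) `ℰ(g-softmax ∘ g) ≤ ℛ(g)` for measurable `g`; consequently the Bayes risks coincide
and the excess Hausdorff risk is controlled by the excess Fenchel-Young risk. -/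
theorem g_logistic_loss_calibration (d : ℕ) (hd : 1 ≤ d)
    (C : Matrix (Fin d) (Fin d) ℝ) (hCsym : C.IsSymm) (hCdiag : ∀ i, C i i = 0)
    (hK : (kernelK C).PosDef)
    (X : Type*) [MeasurableSpace X]
    (ρ : Measure (X × (Fin d → ℝ))) [IsProbabilityMeasure ρ]
    (hρ : ∀ᵐ q ∂ρ, q.2 ∈ simplexS d)
    (hIntR : ∀ g : X → Fin d → ℝ, Measurable g →
      Integrable (fun q : X × (Fin d → ℝ) => FYloss C q.2 (g q.1)) ρ)
    (hIntE : ∀ β : X → Fin d → ℝ, Measurable β → (∀ x, β x ∈ simplexS d) →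
      Integrable (fun q : X × (Fin d → ℝ) => DOmega C q.2 (β q.1)) ρ) :
    (∀ β : X → Fin d → ℝ, Measurable β → (∀ x, β x ∈ simplexS d) →
      ∫ q, FYloss C q.2 (gradOmega C (β q.1)) ∂ρ = ∫ q, DOmega C q.2 (β q.1) ∂ρ) ∧
    (∀ g : X → Fin d → ℝ, Measurable g →
      ∫ q, DOmega C q.2 (gsoftmax C (g q.1)) ∂ρ ≤ ∫ q, FYloss C q.2 (g q.1) ∂ρ) ∧
    sInf {r : ℝ | ∃ β : X → Fin d → ℝ, Measurable β ∧ (∀ x, β x ∈ simplexS d) ∧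
        r = ∫ q, DOmega C q.2 (β q.1) ∂ρ}
      = sInf {r : ℝ | ∃ g : X → Fin d → ℝ, Measurable g ∧
        r = ∫ q, FYloss C q.2 (g q.1) ∂ρ} ∧
    ∀ g : X → Fin d → ℝ, Measurable g →
      (∫ q, DOmega C q.2 (gsoftmax C (g q.1)) ∂ρ) -
        sInf {r : ℝ | ∃ β : X → Fin d → ℝ, Measurable β ∧ (∀ x, β x ∈ simplexS d) ∧
          r = ∫ q, DOmega C q.2 (β q.1) ∂ρ}
      ≤ (∫ q, FYloss C q.2 (g q.1) ∂ρ) -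
        sInf {r : ℝ | ∃ g' : X → Fin d → ℝ, Measurable g' ∧
          r = ∫ q, FYloss C q.2 (g' q.1) ∂ρ} :=
  g_logistic_loss_calibration_general d hd C hCsym hCdiag hK X ρ hρ hIntR hIntE
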